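/- For integers q with 1 ≤ q ≤ n and an n-simplex x, Δ_{n-q}(∂x) = Σ_{U ∈ P_q(n)} ( Σ_{u ∈ U^1} d_{u.U^0}(x) ⊗ d_{U^1}(x) + Σ_{u ∈ U^0} d_{U^0}(x) ⊗ d_{u.U^1}(x) ) over 𝔽₂. -/

import Mathlib

/-!
Deleting vertex `i` of `x` and then the positions `S` of the face is the same as deleting the
positions `i.σᵢ(S)` of `x`, where `σᵢ = i.succAbove` is the increasing bijection `ℕ → ℕ ∖ {i}`.
Since `σᵢ` raises an element `j ≥ i` and its position in the set by one each, `U = i.σᵢ(S)` has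
`U⁰ ∖ {i} = σᵢ(S⁰)` and `U¹ ∖ {i} = σᵢ(S¹)`, so the `S`-term of `Δ_{n-q}(dᵢ x)` is
`d_{i.U⁰} x ⊗ d_{i.U¹} x`. The pairs `(i, S)` with `S ∈ P_{q-1}(n-1)` correspond bijectively to the
pairs `(U, u)` with `u ∈ U ∈ P_q(n)`, and `d_{u.U⁰} x ⊗ d_{u.U¹} x` is a summand of the first sum
on the right when `u ∈ U¹` and of the second when `u ∈ U⁰`.
-/

open scoped TensorProduct

def posIn (S : Finset ℕ) (u : ℕ) : ℕ := (S.filter (fun v => v ≤ u)).card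
def idxFun (U : Finset ℕ) (u : ℕ) : ℕ := (u + posIn U u) % 2
def part0 (U : Finset ℕ) : Finset ℕ := U.filter (fun u => idxFun U u = 0)
def part1 (U : Finset ℕ) : Finset ℕ := U.filter (fun u => idxFun U u = 1)

variable {V : Type} [LinearOrder V]

/-- `dFace U x` deletes from the simplex `x` the vertices in (0-based) positions `U`. -/
def dFace (U : Finset ℕ) (x : Finset V) : Finset V :=
  ((((x.sort (· ≤ ·)).zipIdx.map Prod.swap).filter (fun p => decide (p.1 ∉ U))).map Prod.snd).toFinset

/-- Mod 2 simplicial chains: the free `𝔽₂`-module on simplices (finite subsets of `V`). -/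
abbrev Chains (V : Type) [LinearOrder V] := Finset V →₀ ZMod 2


noncomputable instance {V : Type} [LinearOrder V] :
    Zero (TensorProduct (ZMod 2) (Chains V) (Chains V)) :=
  (inferInstance : AddCommMonoid (TensorProduct (ZMod 2) (Chains V) (Chains V))).toAddMonoid.toZero

/-- Basis chain corresponding to a simplex. -/
noncomputable def eC (x : Finset V) : Chains V := Finsupp.single x 1

/-- The cup-`i` coproduct on a basis simplex. -/
noncomputable def deltaSimplex (i : ℤ) (x : Finset V) :
    TensorProduct (ZMod 2) (Chains V) (Chains V) :=
  if 0 ≤ i ∧ i ≤ (x.card : ℤ) - 1 then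
    ∑ U ∈ Finset.powersetCard (x.card - 1 - i.toNat) (Finset.range x.card),
      eC (dFace (part0 U) x) ⊗ₜ[ZMod 2] eC (dFace (part1 U) x)
  else (0 : TensorProduct (ZMod 2) (Chains V) (Chains V))

/-- The cup-`i` coproduct `Δᵢ`, as a linear map on chains. -/
noncomputable def deltaMap (V : Type) [LinearOrder V] (i : ℤ) :
    Chains V →ₗ[ZMod 2] TensorProduct (ZMod 2) (Chains V) (Chains V) :=
  Finsupp.lift _ (ZMod 2) (Finset V) (deltaSimplex i)

/-- Mod 2 boundary of a basis simplex. -/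
noncomputable def bdSimplex (x : Finset V) : Chains V :=
  if 2 ≤ x.card then ∑ i ∈ Finset.range x.card, eC (dFace {i} x) else 0

/-- Mod 2 simplicial boundary `∂ = Σ dᵢ`. -/
noncomputable def bdMap (V : Type) [LinearOrder V] : Chains V →ₗ[ZMod 2] Chains V :=
  Finsupp.lift _ (ZMod 2) (Finset V) bdSimplex

/-- Boundary on the tensor product: `∂(a⊗b) = ∂a⊗b + a⊗∂b` (signs trivial mod 2). -/
noncomputable def bdT (V : Type) [LinearOrder V] :
    TensorProduct (ZMod 2) (Chains V) (Chains V) →ₗ[ZMod 2]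
      TensorProduct (ZMod 2) (Chains V) (Chains V) :=
  TensorProduct.map (bdMap V) LinearMap.id + TensorProduct.map LinearMap.id (bdMap V)

/-- Transposition of tensor factors `T(a⊗b) = b⊗a`. -/
noncomputable def transp (V : Type) [LinearOrder V] :
    TensorProduct (ZMod 2) (Chains V) (Chains V) →ₗ[ZMod 2]
      TensorProduct (ZMod 2) (Chains V) (Chains V) :=
  (TensorProduct.comm (ZMod 2) (Chains V) (Chains V)).toLinearMap

/-- Chain map induced by a simplicial (monotone) map `f`. -/
noncomputable def fChain {W : Type} [LinearOrder W] (f : V → W) :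
    Chains V →ₗ[ZMod 2] Chains W :=
  Finsupp.lift _ (ZMod 2) (Finset V)
    (fun x => if (x.image f).card = x.card then eC (x.image f) else 0)

/-- Evaluation of a cochain on chains. -/
noncomputable def evalCochain (α : Finset V → ZMod 2) : Chains V →ₗ[ZMod 2] ZMod 2 :=
  Finsupp.lift _ (ZMod 2) (Finset V) α

/-- Evaluation of a tensor of cochains on a tensor of chains. -/
noncomputable def pairing (α β : Finset V → ZMod 2) :
    TensorProduct (ZMod 2) (Chains V) (Chains V) →ₗ[ZMod 2] ZMod 2 :=
  (LinearMap.mul' (ZMod 2) (ZMod 2)) ∘ₗ TensorProduct.map (evalCochain α) (evalCochain β)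

/-- Indicator cochain of a single simplex. -/
def indC (a : Finset V) : Finset V → ZMod 2 := fun y => if y = a then 1 else 0

open Finset

def Nat.succAbove (i j : ℕ) : ℕ := if j < i then j else j + 1

def Nat.predAbove (i j : ℕ) : ℕ := if i < j then j - 1 else j

namespace Nat

lemma succAbove_ne (i j : ℕ) : i.succAbove j ≠ i := by
  unfold succAbove; split_ifs <;> omega

lemma strictMono_succAbove (i : ℕ) : StrictMono i.succAbove := by
  intro a b hab; unfold succAbove; split_ifs <;> omega

lemma le_succAbove_iff {i j : ℕ} : i ≤ i.succAbove j ↔ i ≤ j := by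
  unfold succAbove; split_ifs <;> omega

lemma predAbove_succAbove (i j : ℕ) : i.predAbove (i.succAbove j) = j := by
  unfold succAbove predAbove; split_ifs <;> omega

lemma succAbove_predAbove {i j : ℕ} (h : j ≠ i) : i.succAbove (i.predAbove j) = j := by
  unfold succAbove predAbove; split_ifs <;> omega

lemma notMem_image_succAbove (i : ℕ) (S : Finset ℕ) : i ∉ S.image i.succAbove := by
  simpa using fun j _ => succAbove_ne i j

end Nat

def vertexRank (x : Finset V) (v : V) : ℕ := #{w ∈ x | w < v}

lemma exists_orderEmbOfFin_eq {x : Finset V} {v : V} (hv : v ∈ x) :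
    ∃ k, x.orderEmbOfFin rfl k = v := by
  rwa [← Set.mem_range, range_orderEmbOfFin]

lemma vertexRank_orderEmbOfFin (x : Finset V) (k : Fin x.card) :
    vertexRank x (x.orderEmbOfFin rfl k) = k := by
  have : {w ∈ x | w < x.orderEmbOfFin rfl k} =
      (Iio k).map (x.orderEmbOfFin rfl).toEmbedding := by
    ext v
    simp only [mem_filter, mem_map, mem_Iio, RelEmbedding.coe_toEmbedding]
    constructor
    · rintro ⟨hv, hlt⟩
      obtain ⟨j, rfl⟩ := exists_orderEmbOfFin_eq hv
      exact ⟨j, (x.orderEmbOfFin rfl).lt_iff_lt.mp hlt, rfl⟩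
    · rintro ⟨j, hj, rfl⟩
      exact ⟨orderEmbOfFin_mem x rfl j, (x.orderEmbOfFin rfl).lt_iff_lt.mpr hj⟩
  rw [vertexRank, this, card_map, Fin.card_Iio]

lemma mem_dFace {U : Finset ℕ} {x : Finset V} {v : V} :
    v ∈ dFace U x ↔ v ∈ x ∧ vertexRank x v ∉ U := by
  simp only [dFace, List.mem_toFinset, List.mem_map, List.mem_filter, Prod.exists,
    List.mem_zipIdx_iff_getElem?, decide_eq_true_eq, Prod.swap]
  constructor
  · rintro ⟨_, _, ⟨⟨w, k, hk, hkw⟩, hU⟩, rfl⟩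
    obtain ⟨rfl, rfl⟩ := Prod.mk.inj hkw
    obtain ⟨hlt, rfl⟩ := List.getElem?_eq_some_iff.mp hk
    have hk : k < x.card := by simpa using hlt
    change x.orderEmbOfFin rfl ⟨k, hk⟩ ∈ x ∧ vertexRank x (x.orderEmbOfFin rfl ⟨k, hk⟩) ∉ U
    exact ⟨orderEmbOfFin_mem x rfl _, by rwa [vertexRank_orderEmbOfFin]⟩
  · rintro ⟨hv, hU⟩
    obtain ⟨k, rfl⟩ := exists_orderEmbOfFin_eq hv
    rw [vertexRank_orderEmbOfFin] at hU
    refine ⟨k, _, ⟨⟨_, k, ?_, rfl⟩, hU⟩, rfl⟩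
    rw [orderEmbOfFin_apply]
    exact List.getElem?_eq_getElem _

lemma vertexRank_erase (x : Finset V) (a v : V) :
    vertexRank (x.erase a) v =
      if a ∈ x ∧ a < v then vertexRank x v - 1 else vertexRank x v := by
  simp only [vertexRank, filter_erase, card_erase_eq_ite, mem_filter]

lemma dFace_singleton {x : Finset V} {i : ℕ} (hi : i < x.card) :
    dFace {i} x = x.erase (x.orderEmbOfFin rfl ⟨i, hi⟩) := by
  ext v
  rw [mem_dFace, mem_erase, mem_singleton]
  constructor
  · rintro ⟨hv, hvi⟩
    refine ⟨?_, hv⟩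
    rintro rfl
    exact hvi (vertexRank_orderEmbOfFin x _)
  · rintro ⟨hvi, hv⟩
    obtain ⟨j, rfl⟩ := exists_orderEmbOfFin_eq hv
    refine ⟨hv, fun hji => hvi ?_⟩
    rw [vertexRank_orderEmbOfFin] at hji
    rw [show j = ⟨i, hi⟩ from Fin.ext hji]

lemma succAbove_vertexRank_dFace_singleton {x : Finset V} {i : ℕ} (hi : i < x.card) {v : V}
    (hv : v ∈ x) (hvi : vertexRank x v ≠ i) :
    i.succAbove (vertexRank (dFace {i} x) v) = vertexRank x v := by
  obtain ⟨j, rfl⟩ := exists_orderEmbOfFin_eq hv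
  rw [vertexRank_orderEmbOfFin] at hvi
  rw [dFace_singleton hi, vertexRank_erase]
  simp only [orderEmbOfFin_mem, true_and, OrderEmbedding.lt_iff_lt, Fin.lt_def,
    vertexRank_orderEmbOfFin, Nat.succAbove]
  split_ifs <;> omega

lemma dFace_dFace_singleton {x : Finset V} {i : ℕ} (hi : i < x.card) (S : Finset ℕ) :
    dFace S (dFace {i} x) = dFace (insert i (S.image i.succAbove)) x := by
  ext v
  simp only [mem_dFace, mem_singleton, mem_insert, mem_image, not_or, not_exists, not_and,
    and_assoc]
  refine and_congr_right fun hv => and_congr_right fun hvi => ?_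
  rw [← succAbove_vertexRank_dFace_singleton hi hv hvi]
  simp only [(Nat.strictMono_succAbove i).injective.eq_iff]
  exact ⟨fun h j hj hji => h (hji ▸ hj), fun h hS => h _ hS rfl⟩

lemma posIn_insert_image_succAbove (S : Finset ℕ) (i j : ℕ) :
    posIn (insert i (S.image i.succAbove)) (i.succAbove j) =
      posIn S j + if i ≤ j then 1 else 0 := by
  rw [posIn, posIn, filter_insert, filter_image]
  simp only [Nat.le_succAbove_iff, (Nat.strictMono_succAbove i).le_iff_le]
  split_ifs
  · rw [card_insert_of_notMem (Nat.notMem_image_succAbove i _),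
      card_image_of_injective _ (Nat.strictMono_succAbove i).injective]
  · rw [card_image_of_injective _ (Nat.strictMono_succAbove i).injective, add_zero]

lemma idxFun_insert_image_succAbove (S : Finset ℕ) (i j : ℕ) :
    idxFun (insert i (S.image i.succAbove)) (i.succAbove j) = idxFun S j := by
  rw [idxFun, idxFun, posIn_insert_image_succAbove, Nat.succAbove]
  split_ifs <;> omega

lemma insert_filter_idxFun_insert_image_succAbove (S : Finset ℕ) (i b : ℕ) :
    insert i {u ∈ insert i (S.image i.succAbove) | idxFun (insert i (S.image i.succAbove)) u = b} =
      insert i ({u ∈ S | idxFun S u = b}.image i.succAbove) := by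
  rw [filter_insert, filter_image]
  simp only [idxFun_insert_image_succAbove]
  split_ifs <;> simp

lemma insert_part0_insert_image_succAbove (S : Finset ℕ) (i : ℕ) :
    insert i (part0 (insert i (S.image i.succAbove))) = insert i ((part0 S).image i.succAbove) :=
  insert_filter_idxFun_insert_image_succAbove S i 0

lemma insert_part1_insert_image_succAbove (S : Finset ℕ) (i : ℕ) :
    insert i (part1 (insert i (S.image i.succAbove))) = insert i ((part1 S).image i.succAbove) :=
  insert_filter_idxFun_insert_image_succAbove S i 1

lemma sum_part1_add_sum_part0 {M : Type*} [AddCommMonoid M] (U : Finset ℕ)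
    (g : Finset ℕ → Finset ℕ → M) :
    ∑ u ∈ part1 U, g (insert u (part0 U)) (part1 U) +
        ∑ u ∈ part0 U, g (part0 U) (insert u (part1 U)) =
      ∑ u ∈ U, g (insert u (part0 U)) (insert u (part1 U)) := by
  have hpart0 : {u ∈ U | ¬idxFun U u = 1} = part0 U :=
    filter_congr fun u _ => by unfold idxFun; omega
  rw [← sum_filter_add_sum_filter_not U (idxFun U · = 1), hpart0]
  congr 1 <;> refine sum_congr rfl fun u hu => ?_
  · rw [insert_eq_of_mem (s := part1 U) hu]
  · rw [insert_eq_of_mem hu]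

lemma sum_sum_insert_image_succAbove {M : Type*} [AddCommMonoid M] (n q : ℕ)
    (f : Finset ℕ → ℕ → M) :
    ∑ i ∈ range (n + 1), ∑ S ∈ powersetCard q (range n), f (insert i (S.image i.succAbove)) i =
      ∑ U ∈ powersetCard (q + 1) (range (n + 1)), ∑ u ∈ U, f U u := by
  rw [← sum_product', sum_sigma']
  refine sum_nbij' (fun p => ⟨insert p.1 (p.2.image p.1.succAbove), p.1⟩)
    (fun p => (p.2, (p.1.erase p.2).image p.2.predAbove)) ?_ ?_ ?_ ?_ fun _ _ => rfl
  · rintro ⟨i, S⟩ h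
    obtain ⟨hi, hS, hcard⟩ := by simpa only [mem_product, mem_range, mem_powersetCard] using h
    refine mem_sigma.2 ⟨mem_powersetCard.2 ⟨?_, ?_⟩, mem_insert_self _ _⟩
    · refine insert_subset (mem_range.2 hi) (image_subset_iff.2 fun j hj => ?_)
      have := mem_range.1 (hS hj)
      rw [mem_range, Nat.succAbove]
      split_ifs <;> omega
    · rw [card_insert_of_notMem (Nat.notMem_image_succAbove i S),
        card_image_of_injective _ (Nat.strictMono_succAbove i).injective, hcard]
  · rintro ⟨U, u⟩ h
    obtain ⟨⟨hU, hcard⟩, hu⟩ := by simpa only [mem_sigma, mem_powersetCard] using h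
    dsimp only
    have hun := mem_range.1 (hU hu)
    refine mem_product.2 ⟨hU hu, mem_powersetCard.2 ⟨image_subset_iff.2 fun j hj => ?_, ?_⟩⟩
    · obtain ⟨hju, hj⟩ := mem_erase.1 hj
      have := mem_range.1 (hU hj)
      rw [mem_range, Nat.predAbove]
      split_ifs <;> omega
    · have hinj : Set.InjOn u.predAbove (U.erase u) := fun a ha b hb hab => by
        rw [← Nat.succAbove_predAbove (mem_erase.1 ha).1, hab,
          Nat.succAbove_predAbove (mem_erase.1 hb).1]
      rw [card_image_of_injOn hinj, card_erase_of_mem hu, hcard, Nat.add_sub_cancel]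
  · rintro ⟨i, S⟩ -
    rw [erase_insert (Nat.notMem_image_succAbove i S), image_image]
    simp [Function.comp_def, Nat.predAbove_succAbove]
  · rintro ⟨U, u⟩ h
    have hu : u ∈ U := (mem_sigma.1 h).2
    dsimp only
    have hid : (U.erase u).image (u.succAbove ∘ u.predAbove) = (U.erase u).image id :=
      image_congr fun j hj => Nat.succAbove_predAbove (mem_erase.1 hj).1
    rw [image_image, hid, image_id, insert_erase hu]

lemma lift_eC {M : Type*} [AddCommMonoid M] [Module (ZMod 2) M] (g : Finset V → M)
    (a : Finset V) : Finsupp.lift M (ZMod 2) (Finset V) g (eC a) = g a := by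
  rw [eC, Finsupp.lift_apply, Finsupp.sum_single_index (by simp), one_smul]

lemma bdMap_eC {x : Finset V} (hx : 2 ≤ x.card) :
    bdMap V (eC x) = ∑ i ∈ range x.card, eC (dFace {i} x) := by
  rw [bdMap, lift_eC, bdSimplex, if_pos hx]

lemma deltaMap_natCast_eC {y : Finset V} {k : ℕ} (hk : k < y.card) :
    deltaMap V k (eC y) = ∑ U ∈ powersetCard (y.card - 1 - k) (range y.card),
      eC (dFace (part0 U) y) ⊗ₜ[ZMod 2] eC (dFace (part1 U) y) := by
  rw [deltaMap, lift_eC, deltaSimplex, if_pos (by omega), Int.toNat_natCast]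

lemma card_dFace_singleton {x : Finset V} {i : ℕ} (hi : i < x.card) :
    (dFace {i} x).card = x.card - 1 := by
  rw [dFace_singleton hi, card_erase_of_mem (orderEmbOfFin_mem x rfl _)]

lemma deltaMap_eC_dFace_singleton {x : Finset V} {n q i : ℕ} (hx : x.card = n + 1) (hq : q < n)
    (hi : i < n + 1) :
    deltaMap V ((n : ℤ) - (q + 1 : ℕ)) (eC (dFace {i} x)) =
      ∑ S ∈ powersetCard q (range n),
        eC (dFace (insert i (part0 (insert i (S.image i.succAbove)))) x) ⊗ₜ[ZMod 2]
          eC (dFace (insert i (part1 (insert i (S.image i.succAbove)))) x) := by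
  have hcard : (dFace {i} x).card = n := by
    rw [card_dFace_singleton (hx ▸ hi), hx, Nat.add_sub_cancel]
  rw [show (n : ℤ) - (q + 1 : ℕ) = (n - 1 - q : ℕ) by omega, deltaMap_natCast_eC (by omega),
    hcard, show n - 1 - (n - 1 - q) = q by omega]
  refine sum_congr rfl fun S _ => ?_
  rw [dFace_dFace_singleton (hx ▸ hi), dFace_dFace_singleton (hx ▸ hi),
    insert_part0_insert_image_succAbove, insert_part1_insert_image_succAbove]

/-- for `1 ≤ q ≤ n` and an `n`-simplex `x`,
`Δ_{n-q}(∂x) = Σ_{U ∈ P_q(n)} ( Σ_{u ∈ U^1} d_{u.U^0}(x) ⊗ d_{U^1}(x)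
  + Σ_{u ∈ U^0} d_{U^0}(x) ⊗ d_{u.U^1}(x) )` over `𝔽₂`. -/
theorem stmt_12 {V : Type} [LinearOrder V] (n q : ℕ) (hq1 : 1 ≤ q) (hq2 : q ≤ n)
    (x : Finset V) (hx : x.card = n + 1) :
    deltaMap V ((n : ℤ) - q) (bdMap V (eC x)) =
      ∑ U ∈ Finset.powersetCard q (Finset.range (n + 1)),
        ((∑ u ∈ part1 U,
            eC (dFace (insert u (part0 U)) x) ⊗ₜ[ZMod 2] eC (dFace (part1 U) x)) +
         (∑ u ∈ part0 U,
            eC (dFace (part0 U) x) ⊗ₜ[ZMod 2] eC (dFace (insert u (part1 U)) x))) := by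
  obtain ⟨p, rfl⟩ : ∃ p, q = p + 1 := ⟨q - 1, by omega⟩
  rw [bdMap_eC (by omega), hx, map_sum,
    sum_congr rfl fun i hi => deltaMap_eC_dFace_singleton hx hq2 (mem_range.1 hi)]
  refine (sum_sum_insert_image_succAbove n p fun U u =>
    eC (dFace (insert u (part0 U)) x) ⊗ₜ[ZMod 2] eC (dFace (insert u (part1 U)) x)).trans ?_
  exact sum_congr rfl fun U _ =>
    (sum_part1_add_sum_part0 U fun A B => eC (dFace A x) ⊗ₜ[ZMod 2] eC (dFace B x)).symm
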